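/- Properties of the tanh-moment functionals: for every k ≥ 1, (i) M_k(x1 ⊠ x2) = M_k(x1)·M_k(x2) for all x1, x2 ∈ X; (ii) if x1, x2 ∈ X satisfy x1 ⪰ x2, then M_k(x1) ≤ M_k(x2); (iii) 0 ≤ M_k(x) ≤ 1 for every x ∈ X. -/

import Mathlib

open MeasureTheory Real Filter Topology Polynomial

noncomputable section

/-- The space of finite signed Borel measures on the extended reals `ℝ̄`. -/
abbrev SM := MeasureTheory.SignedMeasure EReal

namespace SCLDPC

/-- The weight `e^{-α/2}` as an extended nonnegative real (`+∞` at `α = -∞`). -/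
def wt (α : EReal) : ENNReal :=
  if α = ⊥ then ⊤ else if α = ⊤ then 0 else ENNReal.ofReal (Real.exp (-(α.toReal) / 2))

/-- A (nonnegative) Borel measure `μ` on `ℝ̄` is symmetric if
`∫_{-E} e^{-α/2} μ(dα) = ∫_{E} e^{-α/2} μ(dα)` for every Borel set `E`
(stated with extended nonnegative integrals, which is equivalent to requiring
equality whenever one of the two sides is finite). -/
def IsSymmMeasure (μ : Measure EReal) : Prop :=
  ∀ E : Set EReal, MeasurableSet E →
    ∫⁻ α in (fun a : EReal => -a) ⁻¹' E, wt α ∂μ = ∫⁻ α in E, wt α ∂μ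

/-- Positive part of the Jordan decomposition. -/
def jp (x : SM) : Measure EReal := x.toJordanDecomposition.posPart

/-- Negative part of the Jordan decomposition. -/
def jn (x : SM) : Measure EReal := x.toJordanDecomposition.negPart

instance (x : SM) : IsFiniteMeasure (jp x) := x.toJordanDecomposition.posPart_finite

instance (x : SM) : IsFiniteMeasure (jn x) := x.toJordanDecomposition.negPart_finite

/-- A finite signed Borel measure on `ℝ̄` is symmetric iff both parts of its Jordan
decomposition are symmetric measures. -/
def IsSymm (x : SM) : Prop := IsSymmMeasure (jp x) ∧ IsSymmMeasure (jn x)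

/-- Membership in `X`, the set of symmetric probability measures on `ℝ̄`. -/
def MemX (x : SM) : Prop :=
  (∃ (μ : Measure EReal) (hμ : IsProbabilityMeasure μ),
      x = (letI := hμ; μ.toSignedMeasure)) ∧ IsSymm x

/-- Membership in `X_d`, the set of differences of symmetric probability measures. -/
def MemXd (y : SM) : Prop := ∃ x1 x2 : SM, MemX x1 ∧ MemX x2 ∧ y = x1 - x2

/-- Integral of a real function against a finite signed measure. -/
def sInt (f : EReal → ℝ) (x : SM) : ℝ := (∫ α, f α ∂(jp x)) - ∫ α, f α ∂(jn x)

/-- `tanh(α/2)` extended continuously to `ℝ̄`. -/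
def tanhHalf (α : EReal) : ℝ :=
  if α = ⊤ then 1 else if α = ⊥ then -1 else Real.tanh (α.toReal / 2)

/-- The inverse hyperbolic tangent on `(-1, 1)`. -/
def artanh (t : ℝ) : ℝ := Real.log ((1 + t) / (1 - t)) / 2

/-- `2 tanh⁻¹(t)` valued in `ℝ̄` (sending `t ≥ 1` to `+∞` and `t ≤ -1` to `-∞`). -/
def atanhTwo (t : ℝ) : EReal :=
  if 1 ≤ t then ⊤ else if t ≤ -1 then ⊥ else ((2 * artanh t : ℝ) : EReal)

/-- Variable-node convolution `⊛` of two (nonnegative) measures: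
`(μ ⊛ ν)(E) = ∫ μ(E - α) ν(dα)`, i.e. the pushforward of `μ × ν` under addition. -/
def mConv (μ ν : Measure EReal) : Measure EReal :=
  (μ.prod ν).map fun p => p.1 + p.2

/-- Check-node convolution `⊠` of two (nonnegative) measures:
`(μ ⊠ ν)(E) = ∫ μ(2 tanh⁻¹(tanh(E/2) / tanh(α/2))) ν(dα)`, where the argument of `μ`
is the image of `E` under `β ↦ 2 tanh⁻¹(tanh(β/2) / tanh(α/2))`; equivalently, the
pushforward of `μ × ν` under `(β, α) ↦ 2 tanh⁻¹(tanh(β/2) · tanh(α/2))`. -/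
def mCheck (μ ν : Measure EReal) : Measure EReal :=
  (μ.prod ν).map fun p => atanhTwo (tanhHalf p.1 * tanhHalf p.2)

instance (μ ν : Measure EReal) [IsFiniteMeasure μ] [IsFiniteMeasure ν] :
    IsFiniteMeasure (mConv μ ν) := by unfold mConv; infer_instance

instance (μ ν : Measure EReal) [IsFiniteMeasure μ] [IsFiniteMeasure ν] :
    IsFiniteMeasure (mCheck μ ν) := by unfold mCheck; infer_instance

/-- The variable-node operation `⊛` extended bilinearly to finite signed measures. -/
def sConv (x y : SM) : SM :=
  (mConv (jp x) (jp y)).toSignedMeasure - (mConv (jp x) (jn y)).toSignedMeasure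
    - (mConv (jn x) (jp y)).toSignedMeasure + (mConv (jn x) (jn y)).toSignedMeasure

/-- The check-node operation `⊠` extended bilinearly to finite signed measures. -/
def sCheck (x y : SM) : SM :=
  (mCheck (jp x) (jp y)).toSignedMeasure - (mCheck (jp x) (jn y)).toSignedMeasure
    - (mCheck (jn x) (jp y)).toSignedMeasure + (mCheck (jn x) (jn y)).toSignedMeasure

/-- The tanh-moment functional `M_k(x) = ∫ tanh(α/2)^{2k} x(dα)`. -/
def Mfun (k : ℕ) (x : SM) : ℝ := sInt (fun α => tanhHalf α ^ (2 * k)) x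

/-- `I_f(x) = ∫ f(|tanh(α/2)|) x(dα)`. -/
def If (f : ℝ → ℝ) (x : SM) : ℝ := sInt (fun α => f |tanhHalf α|) x

/-- `x1` is degraded with respect to `x2` (written `x1 ⪰ x2`): `I_f(x1) ≥ I_f(x2)` for
every concave non-increasing `f : [0,1] → ℝ`. -/
def Degraded (x1 x2 : SM) : Prop :=
  ∀ f : ℝ → ℝ, ConcaveOn ℝ (Set.Icc (0 : ℝ) 1) f → AntitoneOn f (Set.Icc (0 : ℝ) 1) →
    If f x2 ≤ If f x1

/-- `x1` is strictly degraded with respect to `x2` (written `x1 ≻ x2`). -/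
def StrictlyDegraded (x1 x2 : SM) : Prop :=
  Degraded x1 x2 ∧ ∃ f : ℝ → ℝ, ConcaveOn ℝ (Set.Icc (0 : ℝ) 1) f ∧
    AntitoneOn f (Set.Icc (0 : ℝ) 1) ∧ If f x2 < If f x1

/-! Under the check-node map `(β, α) ↦ 2 tanh⁻¹(tanh(β/2) tanh(α/2))` the quantity `tanh(·/2)`
is multiplicative, so every moment of `x₁ ⊠ x₂` factors by Fubini. Since `t ↦ -t^{2k}` is concave
and non-increasing on `[0, 1]`, degradation can only lower `M_k`; and `|tanh(α/2)| ≤ 1` bounds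
`M_k` on probability measures. -/

lemma abs_tanhHalf_le_one (α : EReal) : |tanhHalf α| ≤ 1 := by
  unfold tanhHalf
  split_ifs <;> simp [(abs_tanh_lt_one _).le]

lemma measurable_tanhHalf : Measurable tanhHalf := by
  unfold tanhHalf
  refine Measurable.ite measurableSet_eq measurable_const
    (Measurable.ite measurableSet_eq measurable_const ?_)
  simp_rw [Real.tanh_eq_sinh_div_cosh]
  fun_prop

lemma artanh_eq_real_artanh {t : ℝ} (ht : t ∈ Set.Icc (-1) 1) : artanh t = Real.artanh t := by
  rw [Real.artanh_eq_half_log ht, artanh]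
  ring

lemma tanhHalf_atanhTwo {t : ℝ} (ht : |t| ≤ 1) : tanhHalf (atanhTwo t) = t := by
  obtain ⟨hneg, hpos⟩ := abs_le.mp ht
  unfold atanhTwo
  split_ifs with h1 h2
  · simp [tanhHalf, le_antisymm hpos h1]
  · simp [tanhHalf, le_antisymm h2 hneg]
  · rw [tanhHalf, if_neg (EReal.coe_ne_top _), if_neg (EReal.coe_ne_bot _), EReal.toReal_coe,
      mul_div_cancel_left₀ _ two_ne_zero, artanh_eq_real_artanh ⟨hneg, hpos⟩,
      Real.tanh_artanh ⟨not_le.mp h2, not_le.mp h1⟩]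

lemma measurable_atanhTwo : Measurable atanhTwo := by
  unfold atanhTwo artanh
  refine Measurable.ite (measurableSet_le measurable_const measurable_id) measurable_const
    (Measurable.ite (measurableSet_le measurable_id measurable_const) measurable_const ?_)
  fun_prop

lemma toJordanDecomposition_measure_toSignedMeasure (μ : Measure EReal) [IsFiniteMeasure μ] :
    μ.toSignedMeasure.toJordanDecomposition = ⟨μ, 0, .zero_right⟩ :=
  SignedMeasure.toJordanDecomposition_eq (by simp [JordanDecomposition.toSignedMeasure])

lemma jp_toSignedMeasure (μ : Measure EReal) [IsFiniteMeasure μ] : jp μ.toSignedMeasure = μ := by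
  rw [jp, toJordanDecomposition_measure_toSignedMeasure]

lemma jn_toSignedMeasure (μ : Measure EReal) [IsFiniteMeasure μ] : jn μ.toSignedMeasure = 0 := by
  rw [jn, toJordanDecomposition_measure_toSignedMeasure]

lemma sInt_toSignedMeasure (f : EReal → ℝ) (μ : Measure EReal) [IsFiniteMeasure μ] :
    sInt f μ.toSignedMeasure = ∫ α, f α ∂μ := by
  simp [sInt, jp_toSignedMeasure, jn_toSignedMeasure]

lemma sCheck_toSignedMeasure (μ ν : Measure EReal) [IsFiniteMeasure μ] [IsFiniteMeasure ν] :
    sCheck μ.toSignedMeasure ν.toSignedMeasure = (mCheck μ ν).toSignedMeasure := by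
  simp [sCheck, mCheck, jp_toSignedMeasure, jn_toSignedMeasure, Measure.toSignedMeasure_zero]

lemma integral_tanhHalf_pow_mCheck (n : ℕ) (μ ν : Measure EReal) [IsFiniteMeasure μ]
    [IsFiniteMeasure ν] :
    ∫ α, tanhHalf α ^ n ∂(mCheck μ ν) = (∫ α, tanhHalf α ^ n ∂μ) * ∫ α, tanhHalf α ^ n ∂ν := by
  have hmeas : Measurable fun p : EReal × EReal => atanhTwo (tanhHalf p.1 * tanhHalf p.2) :=
    measurable_atanhTwo.comp
      ((measurable_tanhHalf.comp measurable_fst).mul (measurable_tanhHalf.comp measurable_snd))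
  have hprod (a b : EReal) :
      tanhHalf (atanhTwo (tanhHalf a * tanhHalf b)) = tanhHalf a * tanhHalf b :=
    tanhHalf_atanhTwo (by
      rw [abs_mul]
      exact mul_le_one₀ (abs_tanhHalf_le_one a) (abs_nonneg _) (abs_tanhHalf_le_one b))
  rw [mCheck,
    integral_map hmeas.aemeasurable (measurable_tanhHalf.pow_const n).aestronglyMeasurable]
  simp_rw [hprod, mul_pow]
  exact integral_prod_mul (fun α => tanhHalf α ^ n) (fun α => tanhHalf α ^ n)

lemma Mfun_sCheck_toSignedMeasure (k : ℕ) (μ ν : Measure EReal) [IsFiniteMeasure μ]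
    [IsFiniteMeasure ν] :
    Mfun k (sCheck μ.toSignedMeasure ν.toSignedMeasure) =
      Mfun k μ.toSignedMeasure * Mfun k ν.toSignedMeasure := by
  simp only [Mfun, sCheck_toSignedMeasure, sInt_toSignedMeasure, integral_tanhHalf_pow_mCheck]

lemma If_neg_pow_two_mul (k : ℕ) (x : SM) : If (fun t => -t ^ (2 * k)) x = -Mfun k x := by
  simp only [If, Mfun, sInt, pow_mul, sq_abs, integral_neg]
  ring

lemma Mfun_le_Mfun_of_degraded (k : ℕ) {x₁ x₂ : SM} (h : Degraded x₁ x₂) :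
    Mfun k x₁ ≤ Mfun k x₂ := by
  have hconcave : ConcaveOn ℝ (Set.Icc 0 1) fun t : ℝ => -t ^ (2 * k) :=
    ((even_two_mul k).convexOn_pow.subset (Set.subset_univ _) (convex_Icc 0 1)).neg
  have hanti : AntitoneOn (fun t : ℝ => -t ^ (2 * k)) (Set.Icc 0 1) :=
    fun _ ha _ _ hab => neg_le_neg (pow_le_pow_left₀ ha.1 hab _)
  have := h _ hconcave hanti
  rw [If_neg_pow_two_mul, If_neg_pow_two_mul] at this
  linarith

lemma Mfun_toSignedMeasure_nonneg (k : ℕ) (μ : Measure EReal) [IsFiniteMeasure μ] :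
    0 ≤ Mfun k μ.toSignedMeasure := by
  rw [Mfun, sInt_toSignedMeasure]
  exact integral_nonneg fun α => (even_two_mul k).pow_nonneg _

lemma Mfun_toSignedMeasure_le_one (k : ℕ) (μ : Measure EReal) [IsProbabilityMeasure μ] :
    Mfun k μ.toSignedMeasure ≤ 1 := by
  have hle (α : EReal) : tanhHalf α ^ (2 * k) ≤ 1 := by
    rw [← (even_two_mul k).pow_abs]
    exact pow_le_one₀ (abs_nonneg _) (abs_tanhHalf_le_one α)
  rw [Mfun, sInt_toSignedMeasure]
  calc ∫ α, tanhHalf α ^ (2 * k) ∂μ ≤ ∫ _, (1 : ℝ) ∂μ :=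
        integral_mono_of_nonneg (.of_forall fun α => (even_two_mul k).pow_nonneg _)
          (integrable_const 1) (.of_forall hle)
    _ = 1 := by simp

theorem tanh_moment_properties_general (k : ℕ) :
    (∀ x1 x2 : SM, MemX x1 → MemX x2 →
      Mfun k (sCheck x1 x2) = Mfun k x1 * Mfun k x2) ∧
    (∀ x1 x2 : SM, MemX x1 → MemX x2 → Degraded x1 x2 → Mfun k x1 ≤ Mfun k x2) ∧
    (∀ x : SM, MemX x → 0 ≤ Mfun k x ∧ Mfun k x ≤ 1) := by
  refine ⟨?_, fun _ _ _ _ => Mfun_le_Mfun_of_degraded k, ?_⟩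
  · rintro _ _ ⟨⟨μ, _, rfl⟩, -⟩ ⟨⟨ν, _, rfl⟩, -⟩
    exact Mfun_sCheck_toSignedMeasure k μ ν
  · rintro _ ⟨⟨μ, _, rfl⟩, -⟩
    exact ⟨Mfun_toSignedMeasure_nonneg k μ, Mfun_toSignedMeasure_le_one k μ⟩

/-- Properties of the tanh-moment functionals: for every `k ≥ 1`,
(i) `M_k(x1 ⊠ x2) = M_k(x1) M_k(x2)` on `X`; (ii) `x1 ⪰ x2` implies
`M_k(x1) ≤ M_k(x2)`; (iii) `0 ≤ M_k(x) ≤ 1` on `X`. -/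
theorem tanh_moment_properties (k : ℕ) (hk : 1 ≤ k) :
    (∀ x1 x2 : SM, MemX x1 → MemX x2 →
      Mfun k (sCheck x1 x2) = Mfun k x1 * Mfun k x2) ∧
    (∀ x1 x2 : SM, MemX x1 → MemX x2 → Degraded x1 x2 → Mfun k x1 ≤ Mfun k x2) ∧
    (∀ x : SM, MemX x → 0 ≤ Mfun k x ∧ Mfun k x ≤ 1) :=
  tanh_moment_properties_general k

end SCLDPC
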